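/- arXiv:1910.12364 — 3 statements merged into one kernel-verified Lean document; each statement's English description precedes it below -/
import Mathlib

section
/- Let G = Cay(Γ, S) be a Cayley graph of a finite abelian group Γ with symmetric generating set S (closed under inverses, not containing the identity) of size δ. If there is an ordering s_1, …, s_δ of the elements of S such that s_{2i−1}·s_{2i} ∉ S ∪ {e} for all 1 ≤ i ≤ ⌊δ/2⌋, then the neighbor connectivity of G satisfies κ_NB(G) ≤ ⌈δ/2⌉. -/
open SimpleGraph

/-- Vertex connectivity: the least number of vertices whose removal leaves
a disconnected or trivial (single-vertex) graph. -/
noncomputable def vConn {V : Type*} (G : SimpleGraph V) : ℕ :=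
  sInf {m | ∃ S : Set V, S.Finite ∧ S.ncard = m ∧
    (¬ (G.induce Sᶜ).Connected ∨ ∃ v, Sᶜ = {v})}

/-- Closed neighborhood of a set of vertices. -/
def closedNbhd {V : Type*} (G : SimpleGraph V) (U : Set V) : Set V :=
  U ∪ {v | ∃ u ∈ U, G.Adj u v}

/-- The survival graph `G ⊖ U`: the subgraph induced on vertices
outside the closed neighborhood of `U`. -/
def survival {V : Type*} (G : SimpleGraph V) (U : Set V) :
    SimpleGraph (↥(closedNbhd G U)ᶜ) := G.induce (closedNbhd G U)ᶜ

/-- The survival graph of `U` is disconnected, complete, or empty. -/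
def SurvivalBad {V : Type*} (G : SimpleGraph V) (U : Set V) : Prop :=
  ((closedNbhd G U)ᶜ ≠ ∅ ∧ ¬ (survival G U).Connected) ∨
  (∀ a ∈ (closedNbhd G U)ᶜ, ∀ b ∈ (closedNbhd G U)ᶜ, a ≠ b → G.Adj a b) ∨
  (closedNbhd G U)ᶜ = ∅

/-- Neighbor connectivity. -/
noncomputable def nbConn {V : Type*} (G : SimpleGraph V) : ℕ :=
  sInf {m | ∃ U : Set V, U.Finite ∧ U.ncard = m ∧ SurvivalBad G U}

/-- The `k`-ary `n`-cube. -/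
def QCube (n k : ℕ) : SimpleGraph (Fin n → ZMod k) where
  Adj u v := u ≠ v ∧ ∃ j, (u j = v j + 1 ∨ u j = v j - 1) ∧ ∀ i ≠ j, u i = v i
  symm := by
    constructor
    rintro u v ⟨hne, j, hj, hrest⟩
    refine ⟨hne.symm, j, ?_, fun i hi => (hrest i hi).symm⟩
    rcases hj with h | h
    · right; rw [h]; ring
    · left; rw [h]; ring
  loopless := by constructor; rintro u ⟨hne, _⟩; exact hne rfl

/-!
Pair up the generators as `s₁s₂, s₃s₄, …` and take `U` to be the set of these products. Each
`s_{2i-1}` and `s_{2i}` is adjacent to `s_{2i-1}s_{2i}` (this uses commutativity), so every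
neighbour of the identity lies in `N[U]`, while the identity itself does not, because no
product lies in `S ∪ {e}`. Hence `e` is isolated in `G ⊖ U`. When `δ` is odd, the last generator
`t` is left over: if some `t s` lies outside `S ∪ {e}`, adding it to `U` covers `t` without
covering `e`; otherwise `{e, t}` is a clique whose neighbours all lie in `N[U]`.
-/

section Survival

variable {V : Type*} (G : SimpleGraph V)

/-- `C` is a union of components of `G ⊖ U`: either it is everything, or `G ⊖ U` is
disconnected. -/
lemma survivalBad_of_isClique (U : Set V) {C : Set V} {x₀ : V} (hx₀ : x₀ ∈ C)
    (hC : G.IsClique C)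
    (hdisj : ∀ c ∈ C, c ∉ closedNbhd G U)
    (hclosed : ∀ x ∈ C, ∀ y, G.Adj x y → y ∈ C ∨ y ∈ closedNbhd G U) :
    SurvivalBad G U := by
  by_cases hsub : (closedNbhd G U)ᶜ ⊆ C
  · exact Or.inr (Or.inl fun a ha b hb hab => hC (hsub ha) (hsub hb) hab)
  obtain ⟨v, hv, hvC⟩ := Set.not_subset.mp hsub
  refine Or.inl ⟨Set.nonempty_iff_ne_empty.mp ⟨v, hv⟩, fun hconn => ?_⟩
  have walk_mem : ∀ (a b : ↥(closedNbhd G U)ᶜ), (survival G U).Walk a b →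
      (a : V) ∈ C → (b : V) ∈ C := by
    intro a b w
    induction w with
    | nil => exact id
    | @cons _ c _ hadj _ ih =>
      exact fun ha => ih ((hclosed _ ha _ hadj).resolve_right c.2)
  obtain ⟨w⟩ := hconn.preconnected ⟨x₀, hdisj x₀ hx₀⟩ ⟨v, hv⟩
  exact hvC (walk_mem _ _ w hx₀)

lemma closedNbhd_mono {U W : Set V} (h : U ⊆ W) : closedNbhd G U ⊆ closedNbhd G W := by
  rintro v (hv | ⟨u, hu, hadj⟩)
  exacts [Or.inl (h hv), Or.inr ⟨u, h hu, hadj⟩]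

lemma nbConn_le_ncard {U : Set V} (hU : U.Finite) (hbad : SurvivalBad G U) :
    nbConn G ≤ U.ncard :=
  Nat.sInf_le ⟨U, hU, rfl, hbad⟩

end Survival

section Cayley

variable {Γ : Type*} [Group Γ] {S : Finset Γ} {G : SimpleGraph Γ}
  (hG : ∀ g h : Γ, G.Adj g h ↔ ∃ s ∈ S, h = g * s) (hSinv : ∀ s ∈ S, s⁻¹ ∈ S)
include hG hSinv

lemma mem_closedNbhd_iff_of_cayley {U : Set Γ} {x : Γ} :
    x ∈ closedNbhd G U ↔ ∃ u ∈ U, u = x ∨ ∃ s ∈ S, u = x * s := by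
  refine ⟨?_, ?_⟩
  · rintro (hx | ⟨u, hu, hadj⟩)
    · exact ⟨x, hx, Or.inl rfl⟩
    obtain ⟨s, hs, rfl⟩ := (hG u x).mp hadj
    exact ⟨u, hu, Or.inr ⟨s⁻¹, hSinv s hs, by group⟩⟩
  · rintro ⟨u, hu, rfl | ⟨s, hs, rfl⟩⟩
    · exact Or.inl hu
    exact Or.inr ⟨x * s, hu, (hG _ _).mpr ⟨s⁻¹, hSinv s hs, by group⟩⟩

lemma one_notMem_closedNbhd_of_cayley {U : Set Γ} (hU : ∀ u ∈ U, u ∉ S ∧ u ≠ 1) :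
    (1 : Γ) ∉ closedNbhd G U := by
  rw [mem_closedNbhd_iff_of_cayley hG hSinv]
  rintro ⟨u, hu, rfl | ⟨s, hs, rfl⟩⟩
  · exact (hU 1 hu).2 rfl
  · exact (hU _ hu).1 (by rwa [one_mul])

lemma nbConn_le_of_forall_mem_closedNbhd {U : Set Γ} (hUfin : U.Finite)
    (hU : ∀ u ∈ U, u ∉ S ∧ u ≠ 1) (hcov : ∀ s ∈ S, s ∈ closedNbhd G U) :
    nbConn G ≤ U.ncard := by
  refine nbConn_le_ncard G hUfin
    (survivalBad_of_isClique G U (Set.mem_singleton 1) (isClique_singleton 1) ?_ ?_)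
  · rintro c rfl
    exact one_notMem_closedNbhd_of_cayley hG hSinv hU
  · rintro x rfl y hxy
    obtain ⟨s, hs, rfl⟩ := (hG 1 y).mp hxy
    exact Or.inr (by rw [one_mul]; exact hcov s hs)

lemma survivalBad_pair_of_cayley {U : Set Γ} (hU : ∀ u ∈ U, u ∉ S ∧ u ≠ 1) {t : Γ}
    (ht : t ∈ S) (hmul : ∀ s ∈ S, t * s ∉ S → t * s = 1)
    (hcov : ∀ s ∈ S, s ≠ t → s ∈ closedNbhd G U) :
    SurvivalBad G U := by
  have ht_notMem : t ∉ closedNbhd G U := by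
    rw [mem_closedNbhd_iff_of_cayley hG hSinv]
    rintro ⟨u, hu, rfl | ⟨s, hs, rfl⟩⟩
    · exact (hU _ hu).1 ht
    · by_cases hts : t * s ∈ S
      exacts [(hU _ hu).1 hts, (hU _ hu).2 (hmul s hs hts)]
  have one_nbrs : ∀ y, G.Adj 1 y → y ∈ ({1, t} : Set Γ) ∨ y ∈ closedNbhd G U := by
    intro y hy
    obtain ⟨s, hs, rfl⟩ := (hG 1 y).mp hy
    rw [one_mul]
    by_cases hst : s = t
    exacts [Or.inl (Or.inr hst), Or.inr (hcov s hs hst)]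
  have t_nbrs : ∀ y, G.Adj t y → y ∈ ({1, t} : Set Γ) ∨ y ∈ closedNbhd G U := by
    intro y hy
    obtain ⟨s, hs, rfl⟩ := (hG t y).mp hy
    by_cases hts : t * s ∈ S
    · by_cases hst : t * s = t
      exacts [Or.inl (Or.inr hst), Or.inr (hcov _ hts hst)]
    · exact Or.inl (Or.inl (hmul s hs hts))
  refine survivalBad_of_isClique G U (Set.mem_insert 1 {t})
    (isClique_pair.mpr fun _ => (hG 1 t).mpr ⟨t, ht, (one_mul t).symm⟩) ?_ ?_
  · rintro c (rfl | rfl)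
    exacts [one_notMem_closedNbhd_of_cayley hG hSinv hU, ht_notMem]
  · rintro x (rfl | rfl)
    exacts [one_nbrs, t_nbrs]

lemma nbConn_le_of_forall_ne_mem_closedNbhd {U : Set Γ} (hUfin : U.Finite)
    (hU : ∀ u ∈ U, u ∉ S ∧ u ≠ 1) {t : Γ} (ht : t ∈ S)
    (hcov : ∀ s ∈ S, s ≠ t → s ∈ closedNbhd G U) :
    nbConn G ≤ U.ncard + 1 := by
  by_cases hext : ∃ s ∈ S, t * s ∉ S ∧ t * s ≠ 1
  · obtain ⟨s, hs, hts⟩ := hext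
    have hU' : ∀ u ∈ insert (t * s) U, u ∉ S ∧ u ≠ 1 := by
      rintro u (rfl | hu)
      exacts [hts, hU u hu]
    have hcov' : ∀ r ∈ S, r ∈ closedNbhd G (insert (t * s) U) := by
      intro r hr
      by_cases hrt : r = t
      · exact Or.inr ⟨t * s, Set.mem_insert _ _,
          (hG _ _).mpr ⟨s⁻¹, hSinv s hs, by rw [hrt, mul_inv_cancel_right]⟩⟩
      · exact closedNbhd_mono G (Set.subset_insert _ _) (hcov r hr hrt)
    calc nbConn G ≤ (insert (t * s) U).ncard :=
          nbConn_le_of_forall_mem_closedNbhd hG hSinv (hUfin.insert _) hU' hcov'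
      _ ≤ U.ncard + 1 := Set.ncard_insert_le _ _
  push Not at hext
  exact (nbConn_le_ncard G hUfin
    (survivalBad_pair_of_cayley hG hSinv hU ht hext hcov)).trans (Nat.le_succ _)

end Cayley

section PairProducts

variable {Γ : Type*} {n : ℕ}

def pairProducts [Mul Γ] (σ : Fin n → Γ) : Set Γ :=
  Set.range fun i : Fin (n / 2) =>
    σ ⟨2 * i, by have := i.2; omega⟩ * σ ⟨2 * i + 1, by have := i.2; omega⟩

lemma pairProducts_finite [Mul Γ] (σ : Fin n → Γ) : (pairProducts σ).Finite :=
  Set.finite_range _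

lemma ncard_pairProducts_le [Mul Γ] (σ : Fin n → Γ) : (pairProducts σ).ncard ≤ n / 2 := by
  simpa [pairProducts, Nat.card_coe_set_eq] using Finite.card_range_le (α := Fin (n / 2)) _

lemma mem_closedNbhd_pairProducts [CommGroup Γ] {S : Finset Γ} {G : SimpleGraph Γ}
    (hG : ∀ g h : Γ, G.Adj g h ↔ ∃ s ∈ S, h = g * s) (hSinv : ∀ s ∈ S, s⁻¹ ∈ S)
    {σ : Fin n → Γ} (hmem : ∀ i, σ i ∈ S) (j : Fin n) (hj : j.1 < 2 * (n / 2)) :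
    σ j ∈ closedNbhd G (pairProducts σ) := by
  have hi : 2 * (j.1 / 2) + 1 < n := by omega
  set a := σ ⟨2 * (j.1 / 2), by omega⟩
  set b := σ ⟨2 * (j.1 / 2) + 1, hi⟩
  have hab : a * b ∈ pairProducts σ := ⟨⟨j.1 / 2, by omega⟩, rfl⟩
  refine Or.inr ⟨a * b, hab, (hG _ _).mpr ?_⟩
  rcases Nat.even_or_odd j.1 with ⟨k, hk⟩ | ⟨k, hk⟩
  · refine ⟨b⁻¹, hSinv _ (hmem _), ?_⟩
    rw [mul_inv_cancel_right]
    exact congrArg σ (Fin.ext (by simp only; omega))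
  · refine ⟨a⁻¹, hSinv _ (hmem _), ?_⟩
    rw [mul_inv_cancel_comm]
    exact congrArg σ (Fin.ext (by simp only; omega))

end PairProducts

theorem stmt13 {Γ : Type*} [CommGroup Γ]
    (S : Finset Γ)
    (hSinv : ∀ s ∈ S, s⁻¹ ∈ S)
    (G : SimpleGraph Γ) (hG : ∀ g h : Γ, G.Adj g h ↔ ∃ s ∈ S, h = g * s)
    (σ : Fin S.card → Γ) (hinj : Function.Injective σ) (hmem : ∀ i, σ i ∈ S)
    (hpair : ∀ i : ℕ, (h : 2 * i + 1 < S.card) →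
      σ ⟨2 * i, by omega⟩ * σ ⟨2 * i + 1, h⟩ ∉ S ∧
      σ ⟨2 * i, by omega⟩ * σ ⟨2 * i + 1, h⟩ ≠ 1) :
    nbConn G ≤ (S.card + 1) / 2 := by
  have hsurj : ∀ s ∈ S, ∃ j, σ j = s := fun s hs => by
    obtain ⟨j, -, hj⟩ := Finset.surjOn_of_injOn_of_card_le σ (fun j _ => hmem j)
      hinj.injOn (by rw [Finset.card_univ, Fintype.card_fin]) hs
    exact ⟨j, hj⟩
  have hP : ∀ u ∈ pairProducts σ, u ∉ S ∧ u ≠ 1 := by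
    rintro _ ⟨i, rfl⟩
    exact hpair i (by omega)
  have hcard := ncard_pairProducts_le σ
  rcases Nat.even_or_odd S.card with ⟨m, hm⟩ | ⟨m, hm⟩
  · refine (nbConn_le_of_forall_mem_closedNbhd hG hSinv (pairProducts_finite σ) hP
      fun s hs => ?_).trans (by omega)
    obtain ⟨j, rfl⟩ := hsurj s hs
    exact mem_closedNbhd_pairProducts hG hSinv hmem j (by omega)
  · have hlast : S.card - 1 < S.card := by omega
    refine (nbConn_le_of_forall_ne_mem_closedNbhd hG hSinv (pairProducts_finite σ) hP
      (hmem ⟨_, hlast⟩) fun s hs hst => ?_).trans (by omega)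
    obtain ⟨j, rfl⟩ := hsurj s hs
    have hj : j.1 ≠ S.card - 1 := fun h => hst (congrArg σ (Fin.ext h))
    exact mem_closedNbhd_pairProducts hG hSinv hmem j (by omega)
end

section
/- For n ≥ 2, the neighbor connectivity of the n-dimensional hypercube Q_n equals ⌈n/2⌉. -/
open SimpleGraph

/-!
Upper bound: the `⌈n/2⌉` vertices `e_{2i} + e_{2i+1}` (the last pair shifted to coordinates
`n-2, n-1` when `n` is odd) lie at distance two from `0` and dominate every neighbour of `0`, so
`0` survives as an isolated vertex.

Lower bound: `Q_n` minus `N[A] ∪ B` is connected and nonempty whenever `2|A| + |B| < n`. Split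
`Q_{n+1}` along the first coordinate into two copies of `Q_n`. A vertex of `A` blocks, in the
copy not containing it, only its twin, which may be added to `B` there; so each copy satisfies
the hypothesis as soon as the other copy meets `A ∪ B`. Two such copies are joined by a twin
pair of survivors, because the projection of `N[A] ∪ B` to `Q_n` has at most
`(n+1)|A| + |B| < 2^n` points. If instead one copy misses `A ∪ B`, its survivors form a
connected set to which every survivor of the other copy is joined by its twin. Finally, for
`B = ∅` and `2|A| < n`, counting gives at least three survivors, and the cube is bipartite, so
they do not form a clique.
-/

open Finset

theorem ZMod.two_ne_iff_eq_add_one {a b : ZMod 2} : a ≠ b ↔ b = a + 1 := by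
  revert a b; decide

section Hamming

variable {ι : Type*} [Fintype ι] [DecidableEq ι]

theorem hammingDist_add_single_one (u : ι → ZMod 2) (j : ι) :
    hammingDist u (u + Pi.single j 1) = 1 := by
  rw [hammingDist_eq_hammingNorm, neg_add_cancel_left]
  simp [hammingNorm, Pi.single_apply, filter_eq']

theorem hammingDist_eq_one_iff_eq_add_single {u v : ι → ZMod 2} :
    hammingDist u v = 1 ↔ ∃ j, v = u + Pi.single j 1 := by
  refine ⟨fun h => ?_, fun ⟨j, hj⟩ => hj ▸ hammingDist_add_single_one u j⟩
  obtain ⟨j, hj⟩ := card_eq_one.mp h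
  have hdiff : ∀ i, u i ≠ v i ↔ i = j := fun i => by simpa using Finset.ext_iff.mp hj i
  refine ⟨j, funext fun i => ?_⟩
  rcases eq_or_ne i j with rfl | hij
  · simpa using ZMod.two_ne_iff_eq_add_one.mp ((hdiff i).2 rfl)
  · simp [hij, of_not_not (mt (hdiff i).1 hij)]

theorem card_filter_hammingDist_le_one_le (u : ι → ZMod 2) :
    #{v | hammingDist u v ≤ 1} ≤ Fintype.card ι + 1 := by
  calc #{v | hammingDist u v ≤ 1}
      ≤ #((univ : Finset (Option ι)).image fun o => o.elim u (u + Pi.single · 1)) := by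
        refine card_le_card fun v hv => ?_
        rw [mem_filter, Nat.le_one_iff_eq_zero_or_eq_one, hammingDist_eq_zero,
          hammingDist_eq_one_iff_eq_add_single] at hv
        rcases hv.2 with rfl | ⟨j, rfl⟩
        · exact mem_image.mpr ⟨none, mem_univ _, rfl⟩
        · exact mem_image.mpr ⟨some j, mem_univ _, rfl⟩
    _ ≤ Fintype.card ι + 1 := card_image_le.trans (by simp)

end Hamming

theorem hammingDist_cons {n : ℕ} {β : Type*} [DecidableEq β] (a b : β) (x y : Fin n → β) :
    hammingDist (Fin.cons a x : Fin (n + 1) → β) (Fin.cons b y) =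
      (if a = b then 0 else 1) + hammingDist x y := by
  simp only [hammingDist]
  rw [Fin.card_filter_univ_succ']
  simp [ite_not]

theorem hammingDist_tail_le {n : ℕ} {β : Type*} [DecidableEq β] (u v : Fin (n + 1) → β) :
    hammingDist (Fin.tail u) (Fin.tail v) ≤ hammingDist u v := by
  conv_rhs => rw [← Fin.cons_self_tail u, ← Fin.cons_self_tail v, hammingDist_cons]
  exact Nat.le_add_left _ _

theorem Nat.mul_succ_add_two_le_two_pow_succ (n : ℕ) : n * (n + 1) + 2 ≤ 2 ^ (n + 1) := by
  induction n with
  | zero => norm_num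
  | succ n ih =>
    have := Nat.lt_two_pow_self (n := n + 1)
    rw [pow_succ]
    nlinarith

namespace SimpleGraph

variable {V W : Type*} {G : SimpleGraph V}

theorem Connected.induce_image {H : SimpleGraph W} (f : G →g H) {s : Set V}
    (h : (G.induce s).Connected) : (H.induce (f '' s)).Connected :=
  h.map (induceHom f (Set.mapsTo_image f s))
    fun ⟨_, x, hx, hfx⟩ => ⟨⟨x, hx⟩, Subtype.ext hfx⟩

theorem induce_connected_of_forall_adj {s t : Set V} (ht : (G.induce t).Connected) (hts : t ⊆ s)
    (hadj : ∀ v ∈ s, v ∉ t → ∃ w ∈ t, G.Adj w v) : (G.induce s).Connected := by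
  obtain ⟨⟨u, hu⟩⟩ := ht.nonempty
  refine induce_connected_of_patches u (hts hu) fun {v} hv => ?_
  by_cases hvt : v ∈ t
  · exact ⟨t, hts, hu, hvt, ht.preconnected _ _⟩
  · obtain ⟨w, hw, hwv⟩ := hadj v hv hvt
    refine ⟨t ∪ {w, v}, Set.union_subset hts ?_, Or.inl hu, Or.inr (by simp), ?_⟩
    · simp [Set.insert_subset_iff, hts hw, hv]
    · exact (induce_union_connected ht.preconnected (induce_pair_connected_of_adj hwv).preconnected
        ⟨w, hw, by simp⟩).preconnected _ _

end SimpleGraph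

theorem survivalBad_of_forall_adj_mem_closedNbhd {V : Type*} {G : SimpleGraph V} {U : Set V}
    {v : V} (hv : v ∉ closedNbhd G U) (hiso : ∀ w, G.Adj v w → w ∈ closedNbhd G U) :
    SurvivalBad G U := by
  by_cases h : ∃ w ∈ (closedNbhd G U)ᶜ, w ≠ v
  · obtain ⟨w, hw, hwv⟩ := h
    refine Or.inl ⟨Set.nonempty_iff_ne_empty.mp ⟨v, hv⟩, fun hconn => ?_⟩
    obtain ⟨p⟩ := hconn.preconnected ⟨v, hv⟩ ⟨w, hw⟩
    cases p with
    | nil => exact hwv rfl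
    | @cons _ x _ hadj _ => exact x.prop (hiso x hadj)
  · simp only [not_exists, not_and, not_not] at h
    exact Or.inr (Or.inl fun a ha b hb hab => (hab ((h a ha).trans (h b hb).symm)).elim)

namespace QCube

variable {n : ℕ}

theorem adj_iff_hammingDist_eq_one {u v : Fin n → ZMod 2} :
    (QCube n 2).Adj u v ↔ hammingDist u v = 1 := by
  have hflip : ∀ a b : ZMod 2, (a = b + 1 ∨ a = b - 1) ↔ b = a + 1 := by decide
  change (u ≠ v ∧ ∃ j, (u j = v j + 1 ∨ u j = v j - 1) ∧ ∀ i ≠ j, u i = v i) ↔ _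
  rw [hammingDist_eq_one_iff_eq_add_single]
  constructor
  · rintro ⟨-, j, hj, hrest⟩
    refine ⟨j, funext fun i => ?_⟩
    rcases eq_or_ne i j with rfl | hij
    · simpa using (hflip _ _).mp hj
    · simp [hij, hrest i hij]
  · rintro ⟨j, rfl⟩
    refine ⟨fun h => ?_, j, (hflip _ _).mpr (by simp), fun i hi => by simp [hi]⟩
    simpa using congrFun h j

theorem mem_closedNbhd_iff {U : Set (Fin n → ZMod 2)} {v : Fin n → ZMod 2} :
    v ∈ closedNbhd (QCube n 2) U ↔ ∃ u ∈ U, hammingDist u v ≤ 1 := by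
  simp only [closedNbhd, Set.mem_union, Set.mem_ofPred_eq, adj_iff_hammingDist_eq_one,
    Nat.le_one_iff_eq_zero_or_eq_one, hammingDist_eq_zero, and_or_left, exists_or,
    exists_eq_right]

def parityColoring : (QCube n 2).Coloring (ZMod 2) :=
  Coloring.mk (fun v => ∑ i, v i) fun {u v} h => by
    obtain ⟨j, rfl⟩ :=
      hammingDist_eq_one_iff_eq_add_single.mp (adj_iff_hammingDist_eq_one.mp h)
    simp [sum_add_distrib]

theorem cliqueFree_three : (QCube n 2).CliqueFree 3 :=
  parityColoring.colorable.cliqueFree (by simp)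

def consEmbedding (s : ZMod 2) : QCube n 2 ↪g QCube (n + 1) 2 where
  toFun w := Fin.cons s w
  inj' := Fin.cons_right_injective (α := fun _ => ZMod 2) s
  map_rel_iff' := by simp [adj_iff_hammingDist_eq_one, hammingDist_cons]

@[simp] theorem consEmbedding_apply (s : ZMod 2) (w : Fin n → ZMod 2) :
    consEmbedding s w = Fin.cons s w :=
  rfl

theorem adj_cons_cons_add_one (s : ZMod 2) (w : Fin n → ZMod 2) :
    (QCube (n + 1) 2).Adj (Fin.cons s w) (Fin.cons (s + 1) w) := by
  simp [adj_iff_hammingDist_eq_one, hammingDist_cons]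

section Blocked

def blocked (A B : Finset (Fin n → ZMod 2)) : Finset (Fin n → ZMod 2) :=
  {v | (∃ u ∈ A, hammingDist u v ≤ 1) ∨ v ∈ B}

def survivors (A B : Finset (Fin n → ZMod 2)) : Set (Fin n → ZMod 2) := ↑(blocked A B)ᶜ

variable {A B : Finset (Fin n → ZMod 2)}

theorem mem_blocked {v : Fin n → ZMod 2} :
    v ∈ blocked A B ↔ (∃ u ∈ A, hammingDist u v ≤ 1) ∨ v ∈ B := by
  simp [blocked]

@[simp] theorem mem_survivors {v : Fin n → ZMod 2} :
    v ∈ survivors A B ↔ v ∉ blocked A B := by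
  simp [survivors]

theorem closedNbhd_eq_blocked (U : Finset (Fin n → ZMod 2)) :
    closedNbhd (QCube n 2) ↑U = ↑(blocked U ∅) := by
  ext v
  simp [mem_closedNbhd_iff, mem_blocked]

theorem card_blocked_le : #(blocked A B) ≤ (n + 1) * #A + #B := by
  calc #(blocked A B)
      ≤ #(A.biUnion (fun u => {v | hammingDist u v ≤ 1}) ∪ B) :=
        card_le_card fun v => by simp [mem_blocked]
    _ ≤ ∑ u ∈ A, #{v | hammingDist u v ≤ 1} + #B :=
        (card_union_le _ _).trans (Nat.add_le_add_right card_biUnion_le _)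
    _ ≤ (n + 1) * #A + #B := by
        gcongr
        simpa [mul_comm] using sum_le_card_nsmul A _ (n + 1) fun u _ =>
          (card_filter_hammingDist_le_one_le u).trans_eq (by simp)

theorem survivors_nonempty_of_two_mul_add_le (h : 2 * #A + #B ≤ n) :
    (survivors A B).Nonempty := by
  have hpow := Nat.mul_succ_add_two_le_two_pow_succ n
  rw [pow_succ] at hpow
  have hcount : (n + 1) * #A + #B < 2 ^ n := by
    rcases Nat.eq_zero_or_pos n with rfl | hn
    · simp only [pow_zero]
      omega
    · nlinarith [Nat.mul_le_mul_left (n + 1) h]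
  by_contra! hempty
  have hall : blocked A B = univ :=
    eq_univ_of_forall fun v => by simpa using Set.eq_empty_iff_forall_notMem.mp hempty v
  have := card_blocked_le (A := A) (B := B)
  rw [hall, card_univ, Fintype.card_fun, ZMod.card, Fintype.card_fin] at this
  omega

theorem two_lt_card_compl_blocked (hn : 2 ≤ n) (hA : 2 * #A < n) : 2 < #(blocked A ∅)ᶜ := by
  have hpow := Nat.mul_succ_add_two_le_two_pow_succ n
  rw [pow_succ] at hpow
  have hcount : (n + 1) * #A + 3 ≤ 2 ^ n := by
    nlinarith [Nat.mul_le_mul_left (n + 1) (Nat.succ_le_of_lt hA)]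
  have := card_blocked_le (A := A) (B := ∅)
  rw [card_compl, Fintype.card_fun, ZMod.card, Fintype.card_fin]
  simp only [card_empty, add_zero] at this
  omega

end Blocked

section Slices

noncomputable def slice (A : Finset (Fin (n + 1) → ZMod 2)) (s : ZMod 2) :
    Finset (Fin n → ZMod 2) :=
  A.preimage (consEmbedding s) (consEmbedding s).injective.injOn

def halfSurvivors (A B : Finset (Fin (n + 1) → ZMod 2)) (s : ZMod 2) :
    Set (Fin (n + 1) → ZMod 2) :=
  consEmbedding s '' survivors (slice A s) (slice B s ∪ slice A (s + 1))

variable {A B : Finset (Fin (n + 1) → ZMod 2)} {s : ZMod 2} {w : Fin n → ZMod 2}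

@[simp] theorem mem_slice : w ∈ slice A s ↔ (Fin.cons s w : Fin (n + 1) → ZMod 2) ∈ A :=
  mem_preimage

theorem card_slice_add_card_slice_le (A : Finset (Fin (n + 1) → ZMod 2)) (s : ZMod 2) :
    #(slice A s) + #(slice A (s + 1)) ≤ #A := by
  rw [← card_image_of_injective (slice A s) (consEmbedding s).injective,
    ← card_image_of_injective (slice A (s + 1)) (consEmbedding (s + 1)).injective,
    ← card_union_of_disjoint]
  · exact card_le_card <| union_subset (image_subset_iff.mpr fun _ => mem_slice.mp)
      (image_subset_iff.mpr fun _ => mem_slice.mp)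
  · simp [Finset.disjoint_left, Fin.cons_inj]

theorem cons_mem_blocked_iff :
    (Fin.cons s w : Fin (n + 1) → ZMod 2) ∈ blocked A B ↔
      w ∈ blocked (slice A s) (slice B s ∪ slice A (s + 1)) := by
  simp only [mem_blocked, mem_union, mem_slice]
  constructor
  · rintro (⟨u, hu, hdist⟩ | hB)
    · obtain ⟨t, x, rfl⟩ : ∃ t x, u = Fin.cons t x :=
        ⟨u 0, Fin.tail u, (Fin.cons_self_tail u).symm⟩
      rw [hammingDist_cons] at hdist
      rcases eq_or_ne t s with rfl | hts
      · exact Or.inl ⟨x, hu, by simpa using hdist⟩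
      · obtain rfl : x = w := by simpa [hts] using hdist
        rw [← ZMod.two_ne_iff_eq_add_one.mp hts.symm]
        exact Or.inr (Or.inr hu)
    · exact Or.inr (Or.inl hB)
  · rintro (⟨x, hx, hdist⟩ | hB | hA)
    · exact Or.inl ⟨_, hx, by simpa [hammingDist_cons] using hdist⟩
    · exact Or.inr hB
    · exact Or.inl ⟨_, hA, by simp [hammingDist_cons]⟩

theorem tail_mem_blocked_image_tail {v : Fin (n + 1) → ZMod 2} (hv : v ∈ blocked A B) :
    Fin.tail v ∈ blocked (A.image Fin.tail) (B.image Fin.tail) := by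
  rw [mem_blocked] at hv ⊢
  rcases hv with ⟨u, hu, hdist⟩ | hB
  · exact Or.inl ⟨_, mem_image_of_mem _ hu, (hammingDist_tail_le u v).trans hdist⟩
  · exact Or.inr (mem_image_of_mem _ hB)

theorem survivors_eq_union (s : ZMod 2) :
    survivors A B = halfSurvivors A B s ∪ halfSurvivors A B (s + 1) := by
  ext v
  obtain ⟨t, w, rfl⟩ : ∃ t w, v = Fin.cons t w :=
    ⟨v 0, Fin.tail v, (Fin.cons_self_tail v).symm⟩
  simp only [halfSurvivors, Set.mem_union, Set.mem_image, consEmbedding_apply, Fin.cons_inj]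
  rcases eq_or_ne t s with rfl | hts
  · simp [cons_mem_blocked_iff]
  · obtain rfl := ZMod.two_ne_iff_eq_add_one.mp hts.symm
    simp [cons_mem_blocked_iff]

theorem two_mul_card_slice_add_le (s : ZMod 2) :
    2 * #(slice A s) + #(slice B s ∪ slice A (s + 1)) + (#(slice A (s + 1)) + #(slice B (s + 1)))
      ≤ 2 * #A + #B := by
  have := card_slice_add_card_slice_le A s
  have := card_slice_add_card_slice_le B s
  have := card_union_le (slice B s) (slice A (s + 1))
  omega

theorem connected_induce_survivors_of_slice_eq_empty (hAs : slice A s = ∅) (hBs : slice B s = ∅)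
    (hconn : ((QCube (n + 1) 2).induce (halfSurvivors A B s)).Connected) :
    ((QCube (n + 1) 2).induce (survivors A B)).Connected := by
  rw [survivors_eq_union s]
  refine induce_connected_of_forall_adj hconn Set.subset_union_left ?_
  rintro v (hv | ⟨w, hw, rfl⟩) hvs
  · exact absurd hv hvs
  refine ⟨Fin.cons s w, ⟨w, ?_, rfl⟩, adj_cons_cons_add_one s w⟩
  have hwA : w ∉ slice A (s + 1) := fun hwA =>
    mem_survivors.mp hw (mem_blocked.mpr (Or.inl ⟨w, hwA, by simp⟩))
  simpa [hAs, hBs, mem_blocked] using hwA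

theorem connected_induce_survivors_of_halves (hAB : 2 * #A + #B ≤ n)
    (h₀ : ((QCube (n + 1) 2).induce (halfSurvivors A B 0)).Connected)
    (h₁ : ((QCube (n + 1) 2).induce (halfSurvivors A B 1)).Connected) :
    ((QCube (n + 1) 2).induce (survivors A B)).Connected := by
  obtain ⟨w, hw⟩ := survivors_nonempty_of_two_mul_add_le (A := A.image Fin.tail)
    (B := B.image Fin.tail) (by grind [card_image_le])
  have hcons (s : ZMod 2) : Fin.cons s w ∈ halfSurvivors A B s := by
    refine ⟨w, mem_survivors.mpr fun hb => mem_survivors.mp hw ?_, rfl⟩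
    simpa using tail_mem_blocked_image_tail (cons_mem_blocked_iff.mpr hb)
  rw [survivors_eq_union 0]
  exact connected_induce_union h₀.preconnected h₁.preconnected (hcons 0) (hcons 1)
    (adj_cons_cons_add_one 0 w)

end Slices

theorem connected_induce_survivors : ∀ {n : ℕ} (A B : Finset (Fin n → ZMod 2)),
    2 * #A + #B < n → ((QCube n 2).induce (survivors A B)).Connected
  | 0, _, _, h => absurd h (Nat.not_lt_zero _)
  | 1, A, B, h => by
    obtain rfl : A = ∅ := card_eq_zero.mp (by omega)
    obtain rfl : B = ∅ := card_eq_zero.mp (by omega)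
    refine (connected_iff _).mpr ⟨fun u v => ?_, ⟨⟨0, by simp [mem_blocked]⟩⟩⟩
    rcases eq_or_ne u v with rfl | huv
    · rfl
    refine Adj.reachable (adj_iff_hammingDist_eq_one.mpr (le_antisymm ?_ ?_))
    · simpa using hammingDist_le_card_fintype (x := u.1) (y := v.1)
    · exact hammingDist_pos.mpr (Subtype.coe_ne_coe.mpr huv)
  | m + 2, A, B, h => by
    have hhalf (s : ZMod 2) (hs : 2 * #(slice A s) + #(slice B s ∪ slice A (s + 1)) < m + 1) :=
      (connected_induce_survivors _ _ hs).induce_image (consEmbedding s).toHom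
    by_cases hfree : ∃ s, slice A s = ∅ ∧ slice B s = ∅
    · obtain ⟨s, hAs, hBs⟩ := hfree
      have hs := two_mul_card_slice_add_le (A := A) (B := B) s
      refine connected_induce_survivors_of_slice_eq_empty hAs hBs (hhalf s ?_)
      simp only [hAs, hBs, empty_union, card_empty] at hs ⊢
      omega
    · have hne (s : ZMod 2) : 1 ≤ #(slice A s) + #(slice B s) := by
        by_contra! h0
        exact hfree ⟨s, card_eq_zero.mp (by omega), card_eq_zero.mp (by omega)⟩
      have hconn (s : ZMod 2) := hhalf s (by
        have := two_mul_card_slice_add_le (A := A) (B := B) s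
        have := hne (s + 1)
        omega)
      exact connected_induce_survivors_of_halves (by omega) (hconn 0) (hconn 1)

theorem not_survivalBad_of_two_mul_card_lt (hn : 2 ≤ n) {U : Finset (Fin n → ZMod 2)}
    (hU : 2 * #U < n) :
    ¬ SurvivalBad (QCube n 2) ↑U := by
  have hS : (closedNbhd (QCube n 2) ↑U)ᶜ = survivors U ∅ := by
    rw [closedNbhd_eq_blocked, survivors, coe_compl]
  have hconn : (survival (QCube n 2) ↑U).Connected := by
    rw [survival, hS]
    exact connected_induce_survivors U ∅ (by simpa)
  rintro (⟨-, hnc⟩ | hcomplete | hempty)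
  · exact hnc hconn
  · obtain ⟨a, ha, b, hb, c, hc, hab, hac, hbc⟩ :=
      two_lt_card.mp (two_lt_card_compl_blocked hn hU)
    have hmem {x} (hx : x ∈ (blocked U ∅)ᶜ) : x ∈ (closedNbhd (QCube n 2) ↑U)ᶜ := by
      rw [hS]
      simpa using hx
    exact cliqueFree_three {a, b, c} (is3Clique_triple_iff.mpr
      ⟨hcomplete a (hmem ha) b (hmem hb) hab, hcomplete a (hmem ha) c (hmem hc) hac,
        hcomplete b (hmem hb) c (hmem hc) hbc⟩)
  · obtain ⟨⟨v, hv⟩⟩ := hconn.nonempty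
    rw [hempty] at hv
    exact hv

def pairVec (n i : ℕ) : Fin n → ZMod 2 :=
  fun k => if k.val = min (2 * i) (n - 2) ∨ k.val = min (2 * i) (n - 2) + 1 then 1 else 0

theorem one_lt_hammingDist_pairVec_zero (hn : 2 ≤ n) (i : ℕ) :
    1 < hammingDist (pairVec n i) 0 := by
  rw [hammingDist, one_lt_card]
  exact ⟨⟨min (2 * i) (n - 2), by omega⟩, by simp [pairVec],
    ⟨min (2 * i) (n - 2) + 1, by omega⟩, by simp [pairVec], by simp [Fin.ext_iff]⟩

theorem hammingDist_pairVec_single_le_one (j : Fin n) :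
    hammingDist (pairVec n (j / 2)) (Pi.single j 1) ≤ 1 := by
  refine card_le_one.mpr fun a ha b hb => ?_
  simp only [mem_filter, mem_univ, true_and, pairVec, Pi.single_apply] at ha hb
  have := j.isLt
  split_ifs at ha hb <;> simp_all [Fin.ext_iff] <;> omega

theorem survivalBad_image_pairVec (hn : 2 ≤ n) :
    SurvivalBad (QCube n 2) ↑((range ((n + 1) / 2)).image (pairVec n)) := by
  refine survivalBad_of_forall_adj_mem_closedNbhd (v := 0) ?_ fun w hw => ?_
  · rw [mem_closedNbhd_iff]
    rintro ⟨u, hu, hle⟩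
    obtain ⟨i, -, rfl⟩ := mem_image.mp hu
    exact (one_lt_hammingDist_pairVec_zero hn i).not_ge hle
  · obtain ⟨j, rfl⟩ :=
      hammingDist_eq_one_iff_eq_add_single.mp (adj_iff_hammingDist_eq_one.mp hw)
    rw [mem_closedNbhd_iff]
    refine ⟨pairVec n (j / 2), mem_image_of_mem _ (mem_range.mpr (by omega)), ?_⟩
    simpa using hammingDist_pairVec_single_le_one j

end QCube

theorem stmt14 (n : ℕ) (hn : 2 ≤ n) :
    nbConn (QCube n 2) = (n + 1) / 2 := by
  set U := (range ((n + 1) / 2)).image (QCube.pairVec n)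
  have hU : (U : Set (Fin n → ZMod 2)).ncard ∈
      {m | ∃ U : Set (Fin n → ZMod 2), U.Finite ∧ U.ncard = m ∧
        SurvivalBad (QCube n 2) U} :=
    ⟨U, U.finite_toSet, rfl, QCube.survivalBad_image_pairVec hn⟩
  refine le_antisymm ((Nat.sInf_le hU).trans ?_) (le_csInf ⟨_, hU⟩ ?_)
  · rw [Set.ncard_coe_finset]
    exact card_image_le.trans (card_range _).le
  · rintro _ ⟨W, hW, rfl, hbad⟩
    by_contra! hlt
    refine QCube.not_survivalBad_of_two_mul_card_lt hn (U := hW.toFinset) ?_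
      (by rwa [hW.coe_toFinset])
    rw [← Set.ncard_eq_toFinset_card _ hW]
    omega
end

section
/- Let n, k ≥ 3, let U be a set of ℓ vertices of Q_n^k with 0 ≤ ℓ ≤ n−1, fix a coordinate d and values i, j ∈ Z_k with |i−j| ≡ ±1 (mod k), and let Q[i], Q[j] be the corresponding adjacent subcubes. Let u_i = |U ∩ V(Q[i])|, u_j = |U ∩ V(Q[j])|, and h = 2n − 2 − ℓ − u_i − u_j. Then the number of vertices v of Q[i] such that both v and its outer neighbor v^j in Q[j] lie outside N[U] is strictly greater than h. -/
open SimpleGraph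

/-!
Let `π` be the projection `v ↦ update v d i` onto `Q[i]`. A vertex `v ∈ Q[i]` fails to be
counted only if `v` or `v^j` lies in `N[u]` for some `u ∈ U`; then `v ∈ π(N[u])`. This image has
at most `1 + 2(n-1)` points, and only the single point `π u` when `u ∉ Q[i] ∪ Q[j]`, because a
neighbour of such `u` inside `Q[i] ∪ Q[j]` differs from `u` only in coordinate `d`. Hence at least
`k^(n-1) - ℓ - 2(n-1)(u_i + u_j)` vertices are counted, which beats `h` as soon as
`k^(n-1) > 2n - 2 + (2n-3)(u_i + u_j)`. With `u_i + u_j ≤ n - 1` this holds except for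
`n = k = 3`, `u_i + u_j = ℓ = 2`, where `h = 0` and a single counted vertex is found directly:
one whose two coordinates other than `d` avoid those of both elements of `U`.
-/

open Function Finset

section Layers

variable {ι α : Type*} [DecidableEq ι]

lemma mem_closedNbhd_iff_exists_singleton {V : Type*} {G : SimpleGraph V} {U : Set V} {v : V} :
    v ∈ closedNbhd G U ↔ ∃ u ∈ U, v ∈ closedNbhd G {u} := by
  simp only [closedNbhd, Set.mem_union, Set.mem_ofPred_eq, Set.mem_singleton_iff,
    exists_eq_left]
  constructor
  · rintro (hv | ⟨u, hu, huv⟩)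
    exacts [⟨v, hv, Or.inl rfl⟩, ⟨u, hu, Or.inr huv⟩]
  · rintro ⟨u, hu, rfl | huv⟩
    exacts [Or.inl hu, Or.inr ⟨u, hu, huv⟩]

def crossSurvivors (G : SimpleGraph (ι → α)) (U : Set (ι → α)) (d : ι) (i j : α) :
    Set (ι → α) :=
  {v | v d = i ∧ v ∉ closedNbhd G U ∧ update v d j ∉ closedNbhd G U}

def layerHitBy (G : SimpleGraph (ι → α)) (d : ι) (i j : α) (u : ι → α) : Set (ι → α) :=
  {v | v d = i ∧ (v ∈ closedNbhd G {u} ∨ update v d j ∈ closedNbhd G {u})}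

lemma layer_subset_crossSurvivors_union (G : SimpleGraph (ι → α)) (U : Set (ι → α))
    (d : ι) (i j : α) :
    {v | v d = i} ⊆ crossSurvivors G U d i j ∪ ⋃ u ∈ U, layerHitBy G d i j u := by
  intro v (hv : v d = i)
  by_cases hhit : ∃ u ∈ U, v ∈ layerHitBy G d i j u
  · obtain ⟨u, hu, hvu⟩ := hhit
    exact Or.inr (Set.mem_biUnion hu hvu)
  · push Not at hhit
    refine Or.inl ⟨hv, fun h => ?_, fun h => ?_⟩ <;>
      obtain ⟨u, hu, hvu⟩ := mem_closedNbhd_iff_exists_singleton.mp h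
    exacts [hhit u hu ⟨hv, Or.inl hvu⟩, hhit u hu ⟨hv, Or.inr hvu⟩]

lemma layerHitBy_subset_image (G : SimpleGraph (ι → α)) (d : ι) (i j : α) (u : ι → α) :
    layerHitBy G d i j u ⊆ (update · d i) '' closedNbhd G {u} := by
  rintro v ⟨hvd, hv | hv⟩
  · exact ⟨v, hv, by simp [← hvd]⟩
  · exact ⟨_, hv, by simp [← hvd]⟩

lemma ncard_setOf_apply_eq [Fintype ι] [Fintype α] [DecidableEq α] (d : ι) (a : α) :
    {v : ι → α | v d = a}.ncard = Fintype.card α ^ (Fintype.card ι - 1) := by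
  rw [Set.ncard_eq_toFinset_card', Set.toFinset_ofPred, ← Fintype.piFinset_univ,
    Fintype.card_filter_piFinset_const_eq_of_mem _ _ (mem_univ a), card_univ]

end Layers

namespace QCube

variable {n k : ℕ}

lemma exists_eq_update_of_adj {u v : Fin n → ZMod k} (h : (QCube n k).Adj u v) :
    ∃ c, v = update u c (u c + 1) ∨ v = update u c (u c - 1) := by
  obtain ⟨-, c, hc, hrest⟩ := h
  refine ⟨c, ?_⟩
  simp only [eq_update_iff]
  have hrest' : ∀ e ≠ c, v e = u e := fun e he => (hrest e he).symm
  rcases hc with hc | hc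
  · exact Or.inr ⟨by rw [hc]; ring, hrest'⟩
  · exact Or.inl ⟨by rw [hc]; ring, hrest'⟩

lemma notMem_closedNbhd_singleton {u w : Fin n → ZMod k} {c₁ c₂ : Fin n} (h₁₂ : c₁ ≠ c₂)
    (h₁ : w c₁ ≠ u c₁) (h₂ : w c₂ ≠ u c₂) : w ∉ closedNbhd (QCube n k) {u} := by
  rintro (rfl | ⟨_, hu, hadj⟩)
  · exact h₁ rfl
  rw [Set.mem_singleton_iff.mp hu] at hadj
  have agree : ∀ c', c' ≠ c₁ → w c' = u c' := by
    obtain ⟨c, hc | hc⟩ := exists_eq_update_of_adj hadj <;>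
    · intro c' hc'
      rcases eq_or_ne c c₁ with rfl | h
      · simp [hc, hc']
      · exact absurd (by simp [hc, h.symm]) h₁
  exact h₂ (agree c₂ h₁₂.symm)

lemma update_eq_of_mem_closedNbhd_singleton {u w : Fin n → ZMod k} {d : Fin n}
    (hw : w ∈ closedNbhd (QCube n k) {u}) (hd : w d ≠ u d) (i : ZMod k) :
    update w d i = update u d i := by
  obtain rfl | ⟨_, hu, hadj⟩ := hw
  · rfl
  rw [Set.mem_singleton_iff.mp hu] at hadj
  obtain ⟨c, hc | hc⟩ := exists_eq_update_of_adj hadj <;>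
  · rcases eq_or_ne c d with rfl | h
    · simp [hc]
    · exact absurd (by simp [hc, h.symm]) hd

lemma image_update_closedNbhd_singleton_subset (d : Fin n) (i : ZMod k) (u : Fin n → ZMod k) :
    (update · d i) '' closedNbhd (QCube n k) {u} ⊆
      ↑(insert (update u d i) ((univ.erase d).biUnion fun c =>
        {update (update u d i) c (u c + 1), update (update u d i) c (u c - 1)})) := by
  rintro _ ⟨w, rfl | ⟨_, hu, hadj⟩, rfl⟩
  · exact mem_insert_self _ _
  rw [Set.mem_singleton_iff.mp hu] at hadj
  obtain ⟨c, hc⟩ := exists_eq_update_of_adj hadj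
  rcases eq_or_ne c d with rfl | hcd
  · rcases hc with rfl | rfl <;> simp
  · refine mem_insert_of_mem (mem_biUnion.mpr ⟨c, mem_erase.mpr ⟨hcd, mem_univ c⟩, ?_⟩)
    rcases hc with rfl | rfl <;> simp [update_comm hcd]

lemma ncard_image_update_closedNbhd_singleton_le (d : Fin n) (i : ZMod k)
    (u : Fin n → ZMod k) :
    ((update · d i) '' closedNbhd (QCube n k) {u}).ncard ≤ 1 + 2 * (n - 1) := by
  refine (Set.ncard_le_ncard (image_update_closedNbhd_singleton_subset d i u)
    (Finset.finite_toSet _)).trans ?_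
  rw [Set.ncard_coe_finset]
  refine (card_insert_le _ _).trans ?_
  rw [add_comm]
  gcongr
  calc _ ≤ ∑ c ∈ univ.erase d, 2 := card_biUnion_le.trans (sum_le_sum fun _ _ => card_le_two)
    _ = 2 * (n - 1) := by simp [card_erase_of_mem, mul_comm]

lemma layerHitBy_subset_singleton {d : Fin n} {i j : ZMod k} {u : Fin n → ZMod k}
    (hi : u d ≠ i) (hj : u d ≠ j) :
    layerHitBy (QCube n k) d i j u ⊆ {update u d i} := by
  rintro v ⟨hvd, hv | hv⟩
  · rw [Set.mem_singleton_iff, ← update_eq_of_mem_closedNbhd_singleton hv (hvd ▸ hi.symm) i]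
    simp [← hvd]
  · rw [Set.mem_singleton_iff,
      ← update_eq_of_mem_closedNbhd_singleton hv (by simpa using hj.symm) i]
    simp [← hvd]

lemma ncard_layerHitBy_le (d : Fin n) (i j : ZMod k) (u : Fin n → ZMod k) :
    (layerHitBy (QCube n k) d i j u).ncard ≤
      1 + if u d = i ∨ u d = j then 2 * (n - 1) else 0 := by
  split_ifs with h
  · exact (Set.ncard_le_ncard (layerHitBy_subset_image _ d i j u)
      ((Finset.finite_toSet _).subset (image_update_closedNbhd_singleton_subset d i u))).trans
      (ncard_image_update_closedNbhd_singleton_le d i u)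
  · push Not at h
    exact (Set.ncard_le_ncard (layerHitBy_subset_singleton h.1 h.2)).trans
      (Set.ncard_singleton _).le

lemma pow_le_ncard_crossSurvivors_add [NeZero k] (U : Set (Fin n → ZMod k)) (d : Fin n)
    (i j : ZMod k) :
    k ^ (n - 1) ≤ (crossSurvivors (QCube n k) U d i j).ncard + U.ncard +
      2 * (n - 1) * (U ∩ {v | v d = i ∨ v d = j}).ncard := by
  classical
  set T := U.toFinite.toFinset
  have hfilter : ((T.filter fun u => u d = i ∨ u d = j : Finset _) : Set _) =
      U ∩ {v | v d = i ∨ v d = j} := by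
    ext; simp [T, and_or_left]
  calc k ^ (n - 1) = {v : Fin n → ZMod k | v d = i}.ncard := by
        rw [ncard_setOf_apply_eq, ZMod.card, Fintype.card_fin]
    _ ≤ (crossSurvivors (QCube n k) U d i j ∪ ⋃ u ∈ U, layerHitBy (QCube n k) d i j u).ncard :=
        Set.ncard_le_ncard (layer_subset_crossSurvivors_union _ U d i j)
    _ ≤ (crossSurvivors (QCube n k) U d i j).ncard +
          ∑ u ∈ T, (layerHitBy (QCube n k) d i j u).ncard := by
        refine (Set.ncard_union_le _ _).trans ?_
        gcongr
        simpa [T] using T.set_ncard_biUnion_le (layerHitBy (QCube n k) d i j)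
    _ ≤ (crossSurvivors (QCube n k) U d i j).ncard +
          ∑ u ∈ T, (1 + if u d = i ∨ u d = j then 2 * (n - 1) else 0) := by
        gcongr with u
        exact ncard_layerHitBy_le d i j u
    _ = _ := by
        rw [sum_add_distrib, sum_ite, sum_const_zero, sum_const, sum_const, smul_eq_mul,
          smul_eq_mul, mul_one, add_zero, ← Set.ncard_coe_finset, ← Set.ncard_coe_finset, hfilter,
          Set.Finite.coe_toFinset, add_assoc, mul_comm]

lemma crossSurvivors_nonempty_of_subset_pair {n k : ℕ} [NeZero k] (hn : 3 ≤ n)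
    (hk : 3 ≤ k) {U : Set (Fin n → ZMod k)} {a b : Fin n → ZMod k} (hU : U ⊆ {a, b})
    (d : Fin n) (i j : ZMod k) : (crossSurvivors (QCube n k) U d i j).Nonempty := by
  classical
  have avoid : ∀ c, ∃ x : ZMod k, x ≠ a c ∧ x ≠ b c := fun c => by
    obtain ⟨x, -, hx⟩ := exists_mem_notMem_of_card_lt_card (s := {a c, b c}) (t := univ)
      (card_le_two.trans_lt (by rw [card_univ, ZMod.card]; omega))
    exact ⟨x, by simpa [not_or] using hx⟩
  choose f hfa hfb using avoid
  obtain ⟨c₁, h₁, c₂, h₂, h₁₂⟩ : ∃ c₁ ∈ univ.erase d, ∃ c₂ ∈ univ.erase d, c₁ ≠ c₂ :=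
    one_lt_card.mp (by rw [card_erase_of_mem (mem_univ _), card_univ, Fintype.card_fin]; omega)
  have far : ∀ w : Fin n → ZMod k, (∀ c ≠ d, w c = f c) → w ∉ closedNbhd (QCube n k) U := by
    intro w hw hwU
    obtain ⟨u, hu, hwu⟩ := mem_closedNbhd_iff_exists_singleton.mp hwU
    have hdiff : ∀ c ≠ d, w c ≠ u c := by
      intro c hc
      rw [hw c hc]
      rcases hU hu with rfl | rfl
      exacts [hfa c, hfb c]
    exact notMem_closedNbhd_singleton h₁₂ (hdiff c₁ (ne_of_mem_erase h₁))
      (hdiff c₂ (ne_of_mem_erase h₂)) hwu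
  exact ⟨update f d i, by simp, far _ fun c hc => by simp [hc], far _ fun c hc => by simp [hc]⟩

end QCube

lemma mul_two_mul_add_one_lt_three_pow {m : ℕ} (hm : 3 ≤ m) : m * (2 * m + 1) < 3 ^ m := by
  induction m, hm using Nat.le_induction with
  | base => norm_num
  | succ m hm ih => rw [pow_succ]; nlinarith

lemma two_mul_add_lt_pow {n k s : ℕ} (hn : 3 ≤ n) (hk : 3 ≤ k) (hs : s ≤ n - 1)
    (hexc : ¬(n = 3 ∧ k = 3 ∧ s = 2)) : 2 * n + 2 * (n - 1) * s < k ^ (n - 1) + 2 + s := by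
  obtain ⟨m, rfl⟩ : ∃ m, n = m + 1 := ⟨n - 1, by omega⟩
  simp only [Nat.add_sub_cancel] at hs ⊢
  have hpow : 3 ^ m ≤ k ^ m := Nat.pow_le_pow_left hk m
  rcases (show m = 2 ∨ 3 ≤ m by omega) with rfl | hm
  · rcases (show k = 3 ∨ 4 ≤ k by omega) with rfl | hk4
    · omega
    · nlinarith
  · nlinarith [mul_two_mul_add_one_lt_three_pow hm]

theorem stmt18 (n k ℓ : ℕ) (hn : 3 ≤ n) (hk : 3 ≤ k) (hl : ℓ ≤ n - 1)
    (U : Set (Fin n → ZMod k)) (hU : U.ncard = ℓ)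
    (d : Fin n) (i j : ZMod k) (hij : i = j + 1 ∨ i = j - 1) :
    2 * (n : ℤ) - 2 - ℓ - (U ∩ {v | v d = i}).ncard - (U ∩ {v | v d = j}).ncard <
      ({v : Fin n → ZMod k | v d = i ∧ v ∉ closedNbhd (QCube n k) U ∧
        Function.update v d j ∉ closedNbhd (QCube n k) U}.ncard : ℤ) := by
  have : NeZero k := ⟨by omega⟩
  have : Fact (1 < k) := ⟨by omega⟩
  have hij' : i ≠ j := by
    rintro rfl
    rcases hij with h | h
    exacts [one_ne_zero (left_eq_add.mp h), one_ne_zero (sub_eq_self.mp h.symm)]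
  have hsplit : (U ∩ {v | v d = i ∨ v d = j}).ncard =
      (U ∩ {v | v d = i}).ncard + (U ∩ {v | v d = j}).ncard := by
    rw [Set.ofPred_or, Set.inter_union_distrib_left, Set.ncard_union_eq
      (Set.disjoint_left.mpr fun _ hi hj => hij' (hi.2.symm.trans hj.2))]
  have hsℓ : (U ∩ {v | v d = i ∨ v d = j}).ncard ≤ ℓ :=
    hU ▸ Set.ncard_le_ncard Set.inter_subset_left
  change _ < ((crossSurvivors (QCube n k) U d i j).ncard : ℤ)
  by_cases hexc : n = 3 ∧ k = 3 ∧ (U ∩ {v | v d = i ∨ v d = j}).ncard = 2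
  · obtain ⟨a, b, -, hab⟩ := Set.ncard_eq_two.mp (show U.ncard = 2 by omega)
    have := (QCube.crossSurvivors_nonempty_of_subset_pair hn hk hab.subset d i j).ncard_pos
    omega
  · have hcount := QCube.pow_le_ncard_crossSurvivors_add U d i j
    have harith := two_mul_add_lt_pow hn hk (hsℓ.trans hl) hexc
    omega
end
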